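/- Let λ and μ be Borel probability measures on S^m with λ absolutely continuous with respect to σ. Let π_o ∈ Γ(λ,μ) and let φ be a Kantorovitch potential (real-valued Lipschitz with φ^{cc} = φ) such that π_o(∂_cφ) = 1. Let K be the convex body with the origin in its interior whose support function satisfies h_K(n) = e^{−φ(n)} for all n ∈ S^m (equivalently ρ_K(x) = e^{φ^c(x)} for all x ∈ S^m). Then for every Borel set U ⊆ S^m, μ(U) = λ(𝒢_K(ρ⃗_K(U))), i.e. K solves the Gauss image problem for (λ,μ). -/

import Mathlib

open MeasureTheory Metric Set Real
open scoped RealInnerProductSpace ENNReal NNReal symmDiff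

noncomputable section

/-- Euclidean space `ℝ^{m+1}`. -/
abbrev Euc (m : ℕ) : Type := EuclideanSpace ℝ (Fin (m + 1))

/-- The unit sphere `S^m ⊂ ℝ^{m+1}`. -/
abbrev Sph (m : ℕ) : Type := Metric.sphere (0 : Euc m) 1

variable {m : ℕ}

/-- The spherical (geodesic) distance `d(n,x) = arccos ⟨n,x⟩`. -/
def sphDist (n x : Sph m) : ℝ := Real.arccos ⟪(n : Euc m), (x : Euc m)⟫

/-- The uniform (rotation invariant) probability measure `σ` on the sphere. -/
def unifSph (m : ℕ) : Measure (Sph m) :=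
  (((volume : Measure (Euc m)).toSphere Set.univ)⁻¹) • (volume : Measure (Euc m)).toSphere

/-- The cost `c(n,x) = -log⟨n,x⟩` if `⟨n,x⟩ > 0`, `+∞` otherwise. -/
def sphCost (n x : Sph m) : ℝ≥0∞ :=
  if 0 < ⟪(n : Euc m), (x : Euc m)⟫ then
    ENNReal.ofReal (-Real.log ⟪(n : Euc m), (x : Euc m)⟫) else ∞

/-- The real-valued cost, meaningful on `{⟨n,x⟩ > 0}`. -/
def sphCostR (n x : Sph m) : ℝ := -Real.log ⟪(n : Euc m), (x : Euc m)⟫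

/-- `F_β = {n : ∃ x ∈ F, ⟨n,x⟩ > cos β}`. -/
def sphExpand (F : Set (Sph m)) (β : ℝ) : Set (Sph m) :=
  {n : Sph m | ∃ x ∈ F, Real.cos β < ⟪(n : Euc m), (x : Euc m)⟫}

/-- Weak Aleksandrov condition with constant `α`. -/
def WeakAleksandrov (lam mu : Measure (Sph m)) (α : ℝ) : Prop :=
  ∀ F : Set (Sph m), IsClosed F →
    (∃ u : Sph m, ∀ x ∈ F, 0 ≤ ⟪(x : Euc m), (u : Euc m)⟫) →
    mu F ≤ lam (sphExpand F (π / 2 - 2 * α))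

/-- The support of a measure on a topological space: points all of whose
neighbourhoods have positive measure. -/
def msupport {X : Type*} [TopologicalSpace X] [MeasurableSpace X] (θ : Measure X) : Set X :=
  {x | ∀ U ∈ nhds x, 0 < θ U}

/-- `supp μ` is not contained in any closed hemisphere. -/
def NotInClosedHemisphere (mu : Measure (Sph m)) : Prop :=
  ¬ ∃ u : Sph m, msupport mu ⊆ {x : Sph m | 0 ≤ ⟪(x : Euc m), (u : Euc m)⟫}

/-- Transport plans: probability measures on `S^m × S^m` with marginals `λ` and `μ`. -/
def IsCoupling (lam mu : Measure (Sph m)) (pl : Measure (Sph m × Sph m)) : Prop :=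
  IsProbabilityMeasure pl ∧ pl.map Prod.fst = lam ∧ pl.map Prod.snd = mu

/-- Total transport cost of a plan. -/
def transportCost (pl : Measure (Sph m × Sph m)) : ℝ≥0∞ :=
  ∫⁻ q, sphCost q.1 q.2 ∂pl

/-- A convex body: compact convex with `0` in the interior. -/
def IsConvexBody (K : Set (Euc m)) : Prop :=
  IsCompact K ∧ Convex ℝ K ∧ 0 ∈ interior K

/-- Radial function `ρ_K(x) = max {t > 0 : t • x ∈ K}`. -/
def radialFn (K : Set (Euc m)) (x : Sph m) : ℝ :=
  sSup {t : ℝ | 0 < t ∧ t • (x : Euc m) ∈ K}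

/-- Support function `h_K(n) = max {⟨y,n⟩ : y ∈ K}`. -/
def suppFn (K : Set (Euc m)) (n : Sph m) : ℝ :=
  sSup ((fun y => ⟪y, (n : Euc m)⟫) '' K)

/-- Gauss image `𝒢_K(ρ⃗_K(ω))`: unit vectors normal to `K` at some point
`ρ_K(x) • x`, `x ∈ ω`. -/
def gaussImage (K : Set (Euc m)) (ω : Set (Sph m)) : Set (Sph m) :=
  {n : Sph m | ∃ x ∈ ω, ∀ y ∈ K, ⟪y - radialFn K x • (x : Euc m), (n : Euc m)⟫ ≤ 0}

/-- `K` solves the Gauss image problem for `(λ, μ)`. -/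
def SolvesGIP (K : Set (Euc m)) (lam mu : Measure (Sph m)) : Prop :=
  ∀ ω : Set (Sph m), MeasurableSet ω → mu ω = lam (gaussImage K ω)

/-- Spherical diameter of a set. -/
def sphDiam (A : Set (Sph m)) : ℝ :=
  sSup {r : ℝ | ∃ x ∈ A, ∃ y ∈ A, r = sphDist x y}

/-- The cost as an extended real number. -/
def cE (n x : Sph m) : EReal := (sphCost n x : EReal)

/-- The `c`-transform `f^c(n) = inf_x (c(n,x) - f(x))`, in extended reals. -/
def ctrans (f : Sph m → EReal) (n : Sph m) : EReal := ⨅ x : Sph m, cE n x - f x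

/-- A Kantorovitch potential: real-valued, Lipschitz, with `φ^{cc} = φ`. -/
def IsKPotential (φ : Sph m → ℝ) : Prop :=
  (∃ L : ℝ≥0, LipschitzWith L φ) ∧
  ∀ n : Sph m, ctrans (ctrans (fun y : Sph m => (φ y : EReal))) n = (φ n : EReal)

/-- The `c`-subdifferential `∂_c φ`. -/
def csubdiff (φ : Sph m → ℝ) : Set (Sph m × Sph m) :=
  {q : Sph m × Sph m |
    (φ q.1 : EReal) + ctrans (fun y : Sph m => (φ y : EReal)) q.2 = cE q.1 q.2}

/-- A `κ`-chain from `x` to `y` inside `A ⊆ S^m` for the spherical distance. -/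
def SphChainIn (A : Set (Sph m)) (κ : ℝ) (x y : Sph m) : Prop :=
  ∃ (p : ℕ) (f : ℕ → Sph m), f 0 = x ∧ f p = y ∧ (∀ i ≤ p, f i ∈ A) ∧
    ∀ i < p, sphDist (f i) (f (i + 1)) < κ

/-- `C` is a `κ`-chain connected component of `A ⊆ S^m`. -/
def IsSphChainComponent (A : Set (Sph m)) (κ : ℝ) (C : Set (Sph m)) : Prop :=
  ∃ x ∈ A, C = {y : Sph m | SphChainIn A κ x y}

/-- A `c`-path in `Γ`: `f 0, …, f k ∈ Γ` with `d((f (i+1)).1, (f i).2) < π/2`. -/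
def IsCPath (Γ : Set (Sph m × Sph m)) (k : ℕ) (f : ℕ → Sph m × Sph m) : Prop :=
  (∀ i ≤ k, f i ∈ Γ) ∧ ∀ i < k, sphDist (f (i + 1)).1 (f i).2 < π / 2

/-- The cost of a `c`-path. -/
def cPathCost (k : ℕ) (f : ℕ → Sph m × Sph m) : ℝ :=
  ∑ i ∈ Finset.range k, (sphCostR (f (i + 1)).1 (f i).2 - sphCostR (f i).1 (f i).2)

/-- `c`-cyclically monotone subsets of `S^m × S^m`. -/
def CCyclMonotone (Γ : Set (Sph m × Sph m)) : Prop :=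
  ∀ (k : ℕ) (f : ℕ → Sph m × Sph m), (∀ i < k, f i ∈ Γ) → f k = f 0 →
    ∑ i ∈ Finset.range k, sphCost (f i).1 (f i).2 ≤
      ∑ i ∈ Finset.range k, sphCost (f (i + 1)).1 (f i).2

end

/-! Since `h_K = e^{-φ}`, the `c`-transform of `φ` is `log ρ_K`, so `(n, x) ∈ ∂_cφ` exactly when
`n` is an outer normal of `K` at `ρ_K(x) x`. The support function `h_K` is Lipschitz and positively
homogeneous, so by Rademacher's theorem it is differentiable at `σ`-almost every (hence
`λ`-almost every) `n ∈ S^m`; there the face of `K` with normal `n` is the single point `∇h_K(n)`,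
and the only `x` with `(n, x) ∈ ∂_cφ` is `∇h_K(n) / |∇h_K(n)|`. Hence `π_o` lives on the graph of
this map over a `λ`-conull set, and
`μ(ω) = π_o(S^m × ω) = λ{n : ∇h_K(n) / |∇h_K(n)| ∈ ω} = λ(𝒢_K(ρ⃗_K(ω)))`. -/

open scoped Gradient

lemma differentiableAt_smul_of_homogeneous {E : Type*} [NormedAddCommGroup E]
    [NormedSpace ℝ E] {f : E → ℝ} (hf : ∀ c : ℝ, 0 < c → ∀ z, f (c • z) = c * f z) {z : E}
    (hd : DifferentiableAt ℝ f z) {c : ℝ} (hc : 0 < c) : DifferentiableAt ℝ f (c • z) := by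
  have hfeq : f = fun u => c * f (c⁻¹ • u) := funext fun u => by
    rw [← hf c hc, smul_smul, mul_inv_cancel₀ hc.ne', one_smul]
  rw [hfeq]
  refine (DifferentiableAt.comp (c • z) ?_ (differentiableAt_id.const_smul c⁻¹)).const_mul c
  show DifferentiableAt ℝ f (c⁻¹ • c • z)
  rwa [smul_smul, inv_mul_cancel₀ hc.ne', one_smul]

section SupportFunction

variable {E : Type*} [NormedAddCommGroup E] [InnerProductSpace ℝ E] {K : Set E}

noncomputable def supportFunction (K : Set E) (z : E) : ℝ := sSup ((fun y => ⟪y, z⟫) '' K)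

lemma inner_le_supportFunction (hK : IsCompact K) {y : E} (hy : y ∈ K) (z : E) :
    ⟪y, z⟫ ≤ supportFunction K z :=
  le_csSup (hK.image (continuous_id.inner continuous_const)).bddAbove ⟨y, hy, rfl⟩

lemma isMaxOn_inner_iff (hK : IsCompact K) {k z : E} (hk : k ∈ K) :
    IsMaxOn (fun y => ⟪y, z⟫) K k ↔ ⟪k, z⟫ = supportFunction K z := by
  refine ⟨fun hmax => ?_, fun h => isMaxOn_iff.2 fun y hy => ?_⟩
  · have hgreat : IsGreatest ((fun y => ⟪y, z⟫) '' K) ⟪k, z⟫ := by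
      refine ⟨⟨k, hk, rfl⟩, ?_⟩
      rintro _ ⟨y, hy, rfl⟩
      exact hmax hy
    exact hgreat.csSup_eq.symm
  · simpa only [h] using inner_le_supportFunction hK hy z

lemma IsCompact.exists_isMaxOn_inner (hK : IsCompact K) (hne : K.Nonempty) (z : E) :
    ∃ k ∈ K, IsMaxOn (fun y => ⟪y, z⟫) K k :=
  hK.exists_isMaxOn hne (continuous_id.inner continuous_const).continuousOn

lemma supportFunction_smul {c : ℝ} (hc : 0 ≤ c) (z : E) :
    supportFunction K (c • z) = c * supportFunction K z := by
  rw [supportFunction, supportFunction, ← smul_eq_mul, ← Real.sSup_smul_of_nonneg hc,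
    ← Set.image_smul, Set.image_image]
  simp only [real_inner_smul_right, smul_eq_mul]

lemma lipschitzWith_supportFunction (hK : IsCompact K) (hne : K.Nonempty) :
    ∃ C, LipschitzWith C (supportFunction K) := by
  obtain ⟨R, hR, hnorm⟩ := hK.isBounded.exists_pos_norm_le
  refine ⟨⟨R, hR.le⟩, LipschitzWith.of_le_add_mul _ fun a b => ?_⟩
  obtain ⟨k, hk, hmax⟩ := hK.exists_isMaxOn_inner hne a
  calc supportFunction K a = ⟪k, b⟫ + ⟪k, a - b⟫ := by
        rw [← (isMaxOn_inner_iff hK hk).1 hmax, inner_sub_right]; ring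
    _ ≤ supportFunction K b + R * dist a b := by
        gcongr
        · exact inner_le_supportFunction hK hk b
        · rw [dist_eq_norm]
          exact (real_inner_le_norm k _).trans (by gcongr; exact hnorm k hk)

lemma eq_zero_of_isMaxOn_inner {k z : E} (hk : k ∈ interior K)
    (hmax : IsMaxOn (fun y => ⟪y, z⟫) K k) : z = 0 := by
  have hzero := (hmax.isLocalMax (mem_interior_iff_mem_nhds.1 hk)).hasFDerivAt_eq_zero
    (((innerSL ℝ z).hasFDerivAt).congr_of_eventuallyEq
      (Filter.Eventually.of_forall fun y => real_inner_comm z y))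
  simpa using congrArg (· z) hzero

variable [CompleteSpace E]

lemma exists_ne_zero_isMaxOn_inner (hconv : Convex ℝ K) (hclosed : IsClosed K)
    (hint : (interior K).Nonempty) {p : E} (hp : p ∉ interior K) :
    ∃ z ≠ 0, IsMaxOn (fun y => ⟪y, z⟫) K p := by
  obtain ⟨f, hf⟩ := geometric_hahn_banach_open_point hconv.interior isOpen_interior hp
  have hsub : K ⊆ closure {y | f y < f p} := by
    rw [← hclosed.closure_eq, ← hconv.closure_interior_eq_closure_of_nonempty_interior hint]
    exact closure_mono hf
  refine ⟨(InnerProductSpace.toDual ℝ E).symm f, fun hzero => ?_, fun y hy => ?_⟩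
  · obtain ⟨a, ha⟩ := hint
    have := hf a ha
    simp [(InnerProductSpace.toDual ℝ E).symm.map_eq_zero_iff.1 hzero] at this
  · simp only [mem_ofPred_eq, real_inner_comm _ y, real_inner_comm _ p,
      InnerProductSpace.toDual_symm_apply]
    exact closure_lt_subset_le f.continuous continuous_const (hsub hy)

lemma gradient_supportFunction_eq (hK : IsCompact K) {z k : E}
    (hd : DifferentiableAt ℝ (supportFunction K) z) (hk : k ∈ K)
    (hmax : IsMaxOn (fun y => ⟪y, z⟫) K k) : ∇ (supportFunction K) z = k := by
  have hmin : IsLocalMin (fun y => supportFunction K y - ⟪k, y⟫) z :=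
    Filter.Eventually.of_forall fun y => by
      simp only [← (isMaxOn_inner_iff hK hk).1 hmax, sub_self]
      exact sub_nonneg.2 (inner_le_supportFunction hK hk y)
  have hzero := hmin.hasFDerivAt_eq_zero (hd.hasFDerivAt.sub (innerSL ℝ k).hasFDerivAt)
  rw [sub_eq_zero] at hzero
  rw [gradient, hzero]
  exact (InnerProductSpace.toDual ℝ E).symm_apply_apply k

end SupportFunction

section ConvexBody

variable {m : ℕ} {K : Set (Euc m)}

lemma IsConvexBody.nonempty (hK : IsConvexBody K) : K.Nonempty :=
  ⟨0, interior_subset hK.2.2⟩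

lemma IsConvexBody.exists_pos_forall_smul_mem (hK : IsConvexBody K) :
    ∃ ε : ℝ, 0 < ε ∧ ∀ x : Sph m, ε • (x : Euc m) ∈ K := by
  obtain ⟨ε, hε, hball⟩ := Metric.isOpen_iff.1 isOpen_interior 0 hK.2.2
  refine ⟨ε / 2, half_pos hε, fun x => interior_subset (hball ?_)⟩
  rw [mem_ball_zero_iff, norm_smul, norm_eq_of_mem_sphere, mul_one,
    Real.norm_of_nonneg (half_pos hε).le]
  linarith

lemma supportFunction_pos (hK : IsConvexBody K) (n : Sph m) : 0 < supportFunction K n := by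
  obtain ⟨ε, hε, hmem⟩ := hK.exists_pos_forall_smul_mem
  calc 0 < ε := hε
    _ = ⟪ε • (n : Euc m), n⟫ := by
        rw [real_inner_smul_left, real_inner_self_eq_norm_sq, norm_eq_of_mem_sphere]; ring
    _ ≤ supportFunction K n := inner_le_supportFunction hK.1 (hmem n) n

lemma bddAbove_setOf_smul_mem (hK : IsConvexBody K) (x : Sph m) :
    BddAbove {t : ℝ | 0 < t ∧ t • (x : Euc m) ∈ K} := by
  obtain ⟨R, -, hR⟩ := hK.1.isBounded.exists_pos_norm_le
  refine ⟨R, fun s ⟨hs, hsK⟩ => ?_⟩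
  simpa [norm_smul, abs_of_pos hs] using hR _ hsK

lemma le_radialFn (hK : IsConvexBody K) (x : Sph m) {t : ℝ} (ht : 0 < t)
    (htK : t • (x : Euc m) ∈ K) : t ≤ radialFn K x :=
  le_csSup (bddAbove_setOf_smul_mem hK x) ⟨ht, htK⟩

lemma radialFn_pos (hK : IsConvexBody K) (x : Sph m) : 0 < radialFn K x := by
  obtain ⟨ε, hε, hmem⟩ := hK.exists_pos_forall_smul_mem
  exact hε.trans_le (le_radialFn hK x hε (hmem x))

lemma radialFn_smul_mem (hK : IsConvexBody K) (x : Sph m) : radialFn K x • (x : Euc m) ∈ K := by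
  obtain ⟨ε, hε, hmem⟩ := hK.exists_pos_forall_smul_mem
  have hclosed : IsClosed {t : ℝ | t • (x : Euc m) ∈ K} :=
    hK.1.isClosed.preimage (continuous_id.smul continuous_const)
  exact hclosed.closure_subset_iff.2 (fun t ht => ht.2) 
    (csSup_mem_closure ⟨ε, hε, hmem x⟩ (bddAbove_setOf_smul_mem hK x))

lemma smul_mem_iff_le_radialFn (hK : IsConvexBody K) (x : Sph m) {t : ℝ} (ht : 0 < t) :
    t • (x : Euc m) ∈ K ↔ t ≤ radialFn K x := by
  refine ⟨le_radialFn hK x ht, fun hle => ?_⟩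
  have hρ := radialFn_pos hK x
  have hmem := hK.2.1.smul_mem_of_zero_mem (interior_subset hK.2.2) (radialFn_smul_mem hK x)
    ⟨div_nonneg ht.le hρ.le, (div_le_one hρ).2 hle⟩
  rwa [smul_smul, div_mul_cancel₀ _ hρ.ne'] at hmem

lemma measurable_radialFn (hK : IsConvexBody K) : Measurable (radialFn K) := by
  refine measurable_of_Ici fun t => ?_
  rcases lt_or_ge 0 t with ht | ht
  · have hpre : radialFn K ⁻¹' Ici t = (fun x : Sph m => t • (x : Euc m)) ⁻¹' K :=
      ext fun x => (smul_mem_iff_le_radialFn hK x ht).symm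
    rw [hpre]
    exact (hK.1.isClosed.preimage
      ((continuous_const (y := t)).smul continuous_subtype_val)).measurableSet
  · rw [show radialFn K ⁻¹' Ici t = univ from
      eq_univ_of_forall fun x => ht.trans (radialFn_pos hK x).le]
    exact .univ

lemma radialFn_smul_notMem_interior (hK : IsConvexBody K) (x : Sph m) :
    radialFn K x • (x : Euc m) ∉ interior K := by
  intro hint
  obtain ⟨δ, hδ, hball⟩ := Metric.isOpen_iff.1 isOpen_interior _ hint
  have hmem : (radialFn K x + δ / 2) • (x : Euc m) ∈ K := by
    refine interior_subset (hball ?_)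
    rw [mem_ball, dist_eq_norm, ← sub_smul, add_sub_cancel_left, norm_smul, norm_eq_of_mem_sphere,
      mul_one, Real.norm_of_nonneg (half_pos hδ).le]
    linarith
  have := le_radialFn hK x (by linarith [radialFn_pos hK x]) hmem
  linarith

lemma inv_norm_smul_radialFn_smul (hK : IsConvexBody K) (x : Sph m) :
    ‖radialFn K x • (x : Euc m)‖⁻¹ • (radialFn K x • (x : Euc m)) = x := by
  have hρ := radialFn_pos hK x
  rw [norm_smul, norm_eq_of_mem_sphere, mul_one, Real.norm_of_nonneg hρ.le, smul_smul,
    inv_mul_cancel₀ hρ.ne', one_smul]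

lemma exists_radialFn_smul_eq (hK : IsConvexBody K) {k : Euc m} (hk : k ∈ K)
    (hk' : k ∉ interior K) : ∃ x : Sph m, radialFn K x • (x : Euc m) = k := by
  have hnorm : 0 < ‖k‖ := norm_pos_iff.2 fun h => hk' (h ▸ hK.2.2)
  let x : Sph m := ⟨‖k‖⁻¹ • k, by simp [norm_smul, hnorm.ne']⟩
  have hkx : ‖k‖ • (x : Euc m) = k := by simp [x, smul_smul, hnorm.ne']
  refine ⟨x, ?_⟩
  suffices radialFn K x = ‖k‖ by rw [this, hkx]
  refine le_antisymm (not_lt.1 fun hlt => hk' ?_) (le_radialFn hK x hnorm (by rwa [hkx]))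
  have hρ := radialFn_pos hK x
  -- `k` lies strictly between `0 ∈ interior K` and `ρ_K(x) x ∈ K`
  have hcombo := hK.2.1.combo_interior_closure_mem_interior hK.2.2
    (subset_closure (radialFn_smul_mem hK x)) (a := 1 - ‖k‖ / radialFn K x)
    (b := ‖k‖ / radialFn K x) (by linarith [(div_lt_one hρ).2 hlt]) (by positivity) (by ring)
  rwa [smul_zero, zero_add, smul_smul, div_mul_cancel₀ _ hρ.ne', hkx] at hcombo

def normalGraph (K : Set (Euc m)) : Set (Sph m × Sph m) :=
  {q | IsMaxOn (fun y => ⟪y, (q.1 : Euc m)⟫) K (radialFn K q.2 • (q.2 : Euc m))}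

lemma mem_gaussImage_iff (ω : Set (Sph m)) (n : Sph m) :
    n ∈ gaussImage K ω ↔ ∃ x ∈ ω, (n, x) ∈ normalGraph K := by
  simp only [gaussImage, normalGraph, mem_ofPred_eq, isMaxOn_iff, inner_sub_left, sub_nonpos]

lemma mem_normalGraph_iff (hK : IsConvexBody K) {n x : Sph m} :
    (n, x) ∈ normalGraph K ↔ radialFn K x * ⟪(n : Euc m), x⟫ = suppFn K n := by
  rw [normalGraph, mem_ofPred_eq, isMaxOn_inner_iff hK.1 (radialFn_smul_mem hK x),
    real_inner_smul_left, real_inner_comm]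
  rfl

lemma measurableSet_normalGraph (hK : IsConvexBody K) : MeasurableSet (normalGraph K) := by
  obtain ⟨C, hC⟩ := lipschitzWith_supportFunction hK.1 hK.nonempty
  have hset : normalGraph K =
      {q : Sph m × Sph m | radialFn K q.2 * ⟪(q.1 : Euc m), q.2⟫ = supportFunction K q.1} :=
    ext fun q => mem_normalGraph_iff hK
  rw [hset]
  refine measurableSet_eq_fun ((measurable_radialFn hK).comp measurable_snd |>.mul ?_) ?_
  · exact ((continuous_subtype_val.comp continuous_fst).inner
      (continuous_subtype_val.comp continuous_snd)).measurable
  · exact (hC.continuous.comp (continuous_subtype_val.comp continuous_fst)).measurable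

lemma exists_mem_normalGraph (hK : IsConvexBody K) (x : Sph m) : ∃ n, (n, x) ∈ normalGraph K := by
  obtain ⟨z, hz, hmax⟩ := exists_ne_zero_isMaxOn_inner hK.2.1 hK.1.isClosed ⟨0, hK.2.2⟩
    (radialFn_smul_notMem_interior hK x)
  have hnorm : 0 < ‖z‖ := norm_pos_iff.2 hz
  refine ⟨⟨‖z‖⁻¹ • z, by simp [norm_smul, hnorm.ne']⟩, fun y hy => ?_⟩
  simp only [mem_ofPred_eq, real_inner_smul_right]
  exact mul_le_mul_of_nonneg_left (hmax hy) (inv_pos.2 hnorm).le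

end ConvexBody

section GaussMap

open scoped Pointwise

variable {m : ℕ} {K : Set (Euc m)}

/-- The reverse radial Gauss map `α*_K(n) = ∇h_K(n) / |∇h_K(n)|`; it is meaningful only where `h_K`
is differentiable (elsewhere `∇` is `0`). -/
noncomputable def reverseRadialGaussMap (K : Set (Euc m)) (n : Sph m) : Euc m :=
  ‖∇ (supportFunction K) n‖⁻¹ • ∇ (supportFunction K) n

lemma measurable_reverseRadialGaussMap : Measurable (reverseRadialGaussMap K) := by
  have hgrad : Measurable (∇ (supportFunction K)) :=
    (InnerProductSpace.toDual ℝ (Euc m)).symm.continuous.measurable.comp (measurable_fderiv ℝ _)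
  exact (hgrad.norm.inv.smul hgrad).comp continuous_subtype_val.measurable

lemma mem_normalGraph_iff_eq_reverseRadialGaussMap (hK : IsConvexBody K) {n x : Sph m}
    (hd : DifferentiableAt ℝ (supportFunction K) n) :
    (n, x) ∈ normalGraph K ↔ (x : Euc m) = reverseRadialGaussMap K n := by
  refine ⟨fun hx => ?_, fun hx => ?_⟩
  · rw [reverseRadialGaussMap, gradient_supportFunction_eq hK.1 hd (radialFn_smul_mem hK x) hx,
      inv_norm_smul_radialFn_smul hK]
  · obtain ⟨k, hk, hmax⟩ := hK.1.exists_isMaxOn_inner hK.nonempty n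
    obtain ⟨x₀, rfl⟩ := exists_radialFn_smul_eq hK hk
      fun hint => ne_zero_of_mem_unit_sphere n (eq_zero_of_isMaxOn_inner hint hmax)
    rw [reverseRadialGaussMap, gradient_supportFunction_eq hK.1 hd hk hmax,
      inv_norm_smul_radialFn_smul hK] at hx
    rwa [Subtype.ext hx]

lemma mem_gaussImage_iff_of_differentiableAt (hK : IsConvexBody K) (ω : Set (Sph m))
    {n : Sph m} (hd : DifferentiableAt ℝ (supportFunction K) n) :
    n ∈ gaussImage K ω ↔ reverseRadialGaussMap K n ∈ Subtype.val '' ω := by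
  simp only [mem_gaussImage_iff, mem_normalGraph_iff_eq_reverseRadialGaussMap hK hd, mem_image]

lemma unifSph_eq_zero_of_volume_cone (B : Set (Sph m)) (hB : MeasurableSet B)
    (hcone : volume (Ioo (0 : ℝ) 1 • ((↑) '' B : Set (Euc m))) = 0) : unifSph m B = 0 := by
  rw [unifSph, Measure.smul_apply, Measure.toSphere_apply' _ hB, hcone, mul_zero, smul_zero]

lemma unifSph_setOf_not_differentiableAt {f : Euc m → ℝ} {C : ℝ≥0} (hf : LipschitzWith C f)
    (hhom : ∀ c : ℝ, 0 < c → ∀ z, f (c • z) = c * f z) :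
    unifSph m {n | ¬ DifferentiableAt ℝ f n} = 0 := by
  refine unifSph_eq_zero_of_volume_cone _
    ((measurableSet_of_differentiableAt ℝ f).compl.preimage continuous_subtype_val.measurable)
    (measure_mono_null ?_ (ae_iff.1 hf.ae_differentiableAt))
  rintro _ ⟨c, hc, _, ⟨n, hn, rfl⟩, rfl⟩ hd
  apply hn
  simpa [smul_smul, inv_mul_cancel₀ hc.1.ne'] using
    differentiableAt_smul_of_homogeneous hhom hd (inv_pos.2 hc.1)

lemma ae_differentiableAt_supportFunction (hK : IsConvexBody K) {lam : Measure (Sph m)}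
    (hac : lam ≪ unifSph m) : ∀ᵐ n : Sph m ∂lam, DifferentiableAt ℝ (supportFunction K) n := by
  obtain ⟨C, hC⟩ := lipschitzWith_supportFunction hK.1 hK.nonempty
  exact ae_iff.2
    (hac (unifSph_setOf_not_differentiableAt hC fun c hc => supportFunction_smul hc.le))

end GaussMap

section CTransform

variable {m : ℕ} {K : Set (Euc m)} {φ : Sph m → ℝ}

lemma cE_of_pos {n x : Sph m} (h : 0 < ⟪(n : Euc m), x⟫) :
    cE n x = ((-Real.log ⟪(n : Euc m), x⟫ : ℝ) : EReal) := by
  have hle : ⟪(n : Euc m), x⟫ ≤ 1 := by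
    simpa using real_inner_le_norm (n : Euc m) x
  rw [cE, sphCost, if_pos h, EReal.coe_ennreal_ofReal,
    max_eq_left (neg_nonneg.2 (Real.log_nonpos h.le hle))]

lemma cE_of_nonpos {n x : Sph m} (h : ⟪(n : Euc m), x⟫ ≤ 0) : cE n x = ⊤ := by
  rw [cE, sphCost, if_neg h.not_gt, EReal.coe_ennreal_top]

lemma ctrans_eq_log_radialFn (hK : IsConvexBody K)
    (hsuppK : ∀ n : Sph m, suppFn K n = Real.exp (-φ n)) (x : Sph m) :
    ctrans (fun y => (φ y : EReal)) x = (Real.log (radialFn K x) : EReal) := by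
  have hφ (n : Sph m) : φ n = -Real.log (suppFn K n) := by rw [hsuppK, Real.log_exp, neg_neg]
  have hρ := radialFn_pos hK x
  refine le_antisymm ?_ (le_iInf fun n => ?_)
  · obtain ⟨n, hn⟩ := exists_mem_normalGraph hK x
    have heq := (mem_normalGraph_iff hK).1 hn
    have hpos : 0 < ⟪(n : Euc m), x⟫ :=
      pos_of_mul_pos_right (heq ▸ supportFunction_pos hK n) hρ.le
    refine (iInf_le _ n).trans_eq ?_
    rw [cE_of_pos (real_inner_comm (x : Euc m) n ▸ hpos), ← EReal.coe_sub, EReal.coe_eq_coe_iff,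
      hφ, ← heq, Real.log_mul hρ.ne' hpos.ne', real_inner_comm]
    ring
  · rcases lt_or_ge 0 ⟪(x : Euc m), n⟫ with hpos | hnonpos
    · rw [cE_of_pos hpos, ← EReal.coe_sub, EReal.coe_le_coe_iff, hφ]
      have hle : radialFn K x * ⟪(x : Euc m), n⟫ ≤ suppFn K n := by
        rw [← real_inner_smul_left]
        exact inner_le_supportFunction hK.1 (radialFn_smul_mem hK x) n
      have hlog := Real.log_le_log (mul_pos hρ hpos) hle
      rw [Real.log_mul hρ.ne' hpos.ne'] at hlog
      linarith
    · rw [cE_of_nonpos hnonpos, EReal.top_sub_coe]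
      exact le_top

lemma csubdiff_eq_normalGraph (hK : IsConvexBody K)
    (hsuppK : ∀ n : Sph m, suppFn K n = Real.exp (-φ n)) : csubdiff φ = normalGraph K := by
  ext ⟨n, x⟩
  have hφ : φ n = -Real.log (suppFn K n) := by rw [hsuppK, Real.log_exp, neg_neg]
  have hρ := radialFn_pos hK x
  have hsupp : 0 < suppFn K n := supportFunction_pos hK n
  rw [mem_normalGraph_iff hK, csubdiff, mem_ofPred_eq, ctrans_eq_log_radialFn hK hsuppK x]
  rcases lt_or_ge 0 ⟪(n : Euc m), x⟫ with hpos | hnonpos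
  · rw [cE_of_pos hpos, ← EReal.coe_add, EReal.coe_eq_coe_iff, hφ,
      ← Real.log_injOn_pos.eq_iff (mul_pos hρ hpos) hsupp, Real.log_mul hρ.ne' hpos.ne']
    constructor <;> intro h <;> linarith
  · rw [cE_of_nonpos hnonpos, ← EReal.coe_add]
    exact iff_of_false (EReal.coe_ne_top _) fun h =>
      (mul_nonpos_of_nonneg_of_nonpos hρ.le hnonpos).not_gt (h ▸ hsupp)

end CTransform

theorem stmt_13_general (m : ℕ) (lam mu : Measure (Sph m))
    (hac : lam ≪ unifSph m)
    (po : Measure (Sph m × Sph m)) (hpo : IsCoupling lam mu po)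
    (φ : Sph m → ℝ) (hfull : po (csubdiff φ) = 1)
    (K : Set (Euc m)) (hK : IsConvexBody K)
    (hsuppK : ∀ n : Sph m, suppFn K n = Real.exp (-φ n)) :
    SolvesGIP K lam mu := by
  intro ω hω
  obtain ⟨_, hfst, hsnd⟩ := hpo
  set D := {n : Sph m | DifferentiableAt ℝ (supportFunction K) n}
  set E := D ∩ reverseRadialGaussMap K ⁻¹' (Subtype.val '' ω)
  have hE : MeasurableSet E :=
    ((measurableSet_of_differentiableAt ℝ _).preimage continuous_subtype_val.measurable).inter
      (measurable_reverseRadialGaussMap ((MeasurableEmbedding.subtype_coe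
        isClosed_sphere.measurableSet).measurableSet_image.2 hω))
  have hD : ∀ᵐ n ∂lam, n ∈ D := ae_differentiableAt_supportFunction hK hac
  have hgauss : gaussImage K ω =ᵐ[lam] E := hD.mono fun n hn => propext
    ((mem_gaussImage_iff_of_differentiableAt hK ω hn).trans (and_iff_right hn).symm)
  have hgraph : ∀ᵐ q ∂po, q ∈ normalGraph K := by
    rw [csubdiff_eq_normalGraph hK hsuppK] at hfull
    exact mem_ae_iff.2 ((prob_compl_eq_zero_iff (measurableSet_normalGraph hK)).2 hfull)
  have hsnd_fst : Prod.snd ⁻¹' ω =ᵐ[po] Prod.fst ⁻¹' E := by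
    filter_upwards [hgraph, ae_of_ae_map measurable_fst.aemeasurable (hfst ▸ hD)]
      with ⟨n, x⟩ hnx hn
    change (x ∈ ω) = (n ∈ D ∧ reverseRadialGaussMap K n ∈ Subtype.val '' ω)
    rw [← (mem_normalGraph_iff_eq_reverseRadialGaussMap hK hn).1 hnx,
      Subtype.val_injective.mem_set_image, and_iff_right hn]
  calc mu ω = po (Prod.snd ⁻¹' ω) := by rw [← hsnd, Measure.map_apply measurable_snd hω]
    _ = po (Prod.fst ⁻¹' E) := measure_congr hsnd_fst
    _ = lam E := by rw [← hfst, Measure.map_apply measurable_fst hE]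
    _ = lam (gaussImage K ω) := (measure_congr hgauss).symm

/-- Section 3: the convex body associated with a Kantorovitch
potential carrying the full mass of a plan solves the Gauss image problem. -/
theorem stmt_13 (m : ℕ) (lam mu : Measure (Sph m))
    [IsProbabilityMeasure lam] [IsProbabilityMeasure mu]
    (hac : lam ≪ unifSph m)
    (po : Measure (Sph m × Sph m)) (hpo : IsCoupling lam mu po)
    (φ : Sph m → ℝ) (hφ : IsKPotential φ) (hfull : po (csubdiff φ) = 1)
    (K : Set (Euc m)) (hK : IsConvexBody K)
    (hsuppK : ∀ n : Sph m, suppFn K n = Real.exp (-φ n)) :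
    SolvesGIP K lam mu :=
  stmt_13_general m lam mu hac po hpo φ hfull K hK hsuppK
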